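/- Let n ≥ 3 be a natural number and ξ ∈ ℝⁿ a nonzero vector. On the space Sym²(ℝⁿ) of symmetric real n×n matrices, equipped with the Frobenius inner product ⟨h, k⟩ = trace(h·k), define: tf(h) = h − (trace(h)/n) Iₙ; for ω ∈ ℝⁿ, ξ⊙ω = (1/2)(ξωᵀ + ωξᵀ); and M(ξ) = (1/2)|ξ|² Iₙ + ((n−2)/(2n)) ξξᵀ (which is invertible). Define Π(ξ) : Sym²(ℝⁿ) → Sym²(ℝⁿ) by Π(ξ)h = tf(h) − tf( ξ ⊙ ( M(ξ)^{−1} ( (tf h)·ξ ) ) ), where (tf h)·ξ is the matrix-vector product. Then Π(ξ) is the orthogonal projection of Sym²(ℝⁿ) onto the subspace K(ξ) = { h ∈ Sym²(ℝⁿ) : trace(h) = 0 and h·ξ = 0 }: that is, for every h, Π(ξ)h ∈ K(ξ); Π(ξ)h = h whenever h ∈ K(ξ); and h − Π(ξ)h is orthogonal to K(ξ) with respect to the Frobenius inner product. -/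

import Mathlib

/-- The trace-free part `tf(h) = h − (trace(h)/n) Iₙ` of a square matrix. -/
noncomputable def tf (n : ℕ) (h : Matrix (Fin n) (Fin n) ℝ) : Matrix (Fin n) (Fin n) ℝ :=
  h - (Matrix.trace h / n) • (1 : Matrix (Fin n) (Fin n) ℝ)

/-- The symmetric product `ξ⊙ω = (1/2)(ξωᵀ + ωξᵀ)`. -/
noncomputable def sprod (n : ℕ) (ξ ω : Fin n → ℝ) : Matrix (Fin n) (Fin n) ℝ :=
  (1 / 2 : ℝ) • (Matrix.vecMulVec ξ ω + Matrix.vecMulVec ω ξ)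

/-- The symbol matrix `M(ξ) = (1/2)|ξ|² Iₙ + ((n−2)/(2n)) ξξᵀ`. -/
noncomputable def Mmat (n : ℕ) (ξ : Fin n → ℝ) : Matrix (Fin n) (Fin n) ℝ :=
  (1 / 2 * ∑ i, ξ i ^ 2) • (1 : Matrix (Fin n) (Fin n) ℝ)
    + (((n : ℝ) - 2) / (2 * n)) • Matrix.vecMulVec ξ ξ

/-- The symbol `Π(ξ)h = tf(h) − tf(ξ ⊙ (M(ξ)⁻¹((tf h)·ξ)))` of the projection operator
`Θ_{g₀}` onto trace-free, divergence-free symmetric 2-tensors. -/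
noncomputable def projSym (n : ℕ) (ξ : Fin n → ℝ) (h : Matrix (Fin n) (Fin n) ℝ) :
    Matrix (Fin n) (Fin n) ℝ :=
  tf n h - tf n (sprod n ξ ((Mmat n ξ)⁻¹.mulVec ((tf n h).mulVec ξ)))

/-!
`M(ξ)` is the matrix of `w ↦ tf(ξ ⊙ w) ξ`, the symbol of `δ tf δ*`. Hence with
`w = M(ξ)⁻¹ ((tf h) ξ)` the correction term `tf(ξ ⊙ w)` has the same contraction with `ξ` as
`tf h`, so `Π(ξ) h` is divergence free. Both `h - tf h` and the correction term are
Frobenius-orthogonal to `K(ξ)`: for `k ∈ K(ξ)` one has `trace (tf a * k) = trace (a * k)` and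
`trace ((ξ ⊙ w) * k) = ⟪w, k ξ⟫ = 0`. For `n ≥ 2`, `M(ξ)` has the explicit inverse
`(2/|ξ|²) I - ((n-2)/(|ξ|⁴(n-1))) ξξᵀ`.
-/

open Matrix

section TraceFree

variable {n : ℕ}

@[simp]
lemma trace_tf (h : Matrix (Fin n) (Fin n) ℝ) : trace (tf n h) = 0 := by
  rcases eq_or_ne n 0 with rfl | hn
  · simp [Matrix.trace]
  · simp [tf, trace_sub, hn]

lemma tf_eq_self {h : Matrix (Fin n) (Fin n) ℝ} (htr : trace h = 0) : tf n h = h := by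
  simp [tf, htr]

lemma Matrix.IsSymm.tf {h : Matrix (Fin n) (Fin n) ℝ} (hh : h.IsSymm) : (tf n h).IsSymm :=
  hh.sub (isSymm_one.smul _)

lemma tf_mulVec (h : Matrix (Fin n) (Fin n) ℝ) (v : Fin n → ℝ) :
    tf n h *ᵥ v = h *ᵥ v - (trace h / n) • v := by
  simp [tf, sub_mulVec, smul_mulVec]

lemma trace_tf_mul {k : Matrix (Fin n) (Fin n) ℝ} (a : Matrix (Fin n) (Fin n) ℝ)
    (hk : trace k = 0) : trace (tf n a * k) = trace (a * k) := by
  simp [tf, sub_mul, trace_sub, hk]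

end TraceFree

section SymmetricProduct

variable {n : ℕ}

lemma isSymm_sprod (x w : Fin n → ℝ) : (sprod n x w).IsSymm := by
  simp only [sprod, IsSymm, transpose_smul, transpose_add, transpose_vecMulVec, add_comm]

lemma trace_sprod (x w : Fin n → ℝ) : trace (sprod n x w) = x ⬝ᵥ w := by
  simp only [sprod, trace_smul, trace_add, trace_vecMulVec, dotProduct_comm w x, smul_eq_mul]
  ring

lemma sprod_mulVec (x w v : Fin n → ℝ) :
    sprod n x w *ᵥ v = (1 / 2 : ℝ) • ((w ⬝ᵥ v) • x + (x ⬝ᵥ v) • w) := by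
  simp [sprod, smul_mulVec, add_mulVec, vecMulVec_mulVec]

lemma trace_sprod_mul_eq_zero {x : Fin n → ℝ} {k : Matrix (Fin n) (Fin n) ℝ} (w : Fin n → ℝ)
    (hk : k.IsSymm) (hkx : k *ᵥ x = 0) : trace (sprod n x w * k) = 0 := by
  have hxk : x ᵥ* k = 0 := by rw [← mulVec_transpose, hk.eq, hkx]
  simp [sprod, add_mul, vecMulVec_mul, trace_vecMulVec, hxk, dotProduct_comm x,
    ← dotProduct_mulVec, hkx]

end SymmetricProduct

section Symbol

variable {n : ℕ} {ξ : Fin n → ℝ}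

lemma sum_sq_eq_dotProduct (ξ : Fin n → ℝ) : ∑ i, ξ i ^ 2 = ξ ⬝ᵥ ξ := by
  simp [dotProduct, sq]

lemma tf_sprod_mulVec_self (hn : n ≠ 0) (ξ w : Fin n → ℝ) :
    tf n (sprod n ξ w) *ᵥ ξ = Mmat n ξ *ᵥ w := by
  simp only [tf_mulVec, sprod_mulVec, trace_sprod, Mmat, add_mulVec, smul_mulVec, one_mulVec,
    vecMulVec_mulVec, op_smul_eq_smul, sum_sq_eq_dotProduct, dotProduct_comm w ξ]
  have : (n : ℝ) ≠ 0 := by exact_mod_cast hn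
  match_scalars <;> field_simp

lemma mmat_mul_inverse (hn : 2 ≤ n) (hξ : ξ ≠ 0) :
    Mmat n ξ * ((2 / (ξ ⬝ᵥ ξ)) • 1
      - (((n : ℝ) - 2) / ((ξ ⬝ᵥ ξ) ^ 2 * ((n : ℝ) - 1))) • vecMulVec ξ ξ) = 1 := by
  have hs : ξ ⬝ᵥ ξ ≠ 0 := by simpa [dotProduct_self_eq_zero] using hξ
  have hn0 : (n : ℝ) ≠ 0 := by positivity
  have hn1 : (n : ℝ) - 1 ≠ 0 := by
    have : (2 : ℝ) ≤ n := by exact_mod_cast hn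
    linarith
  simp only [Mmat, sum_sq_eq_dotProduct, add_mul, mul_sub, smul_mul_smul_comm, mul_one, one_mul,
    vecMulVec_mul_vecMulVec, vecMulVec_smul]
  match_scalars
  · field_simp
  · field_simp
    ring

lemma isUnit_mmat (hn : 2 ≤ n) (hξ : ξ ≠ 0) : IsUnit (Mmat n ξ) :=
  (isUnit_iff_isUnit_det _).2 (isUnit_det_of_right_inverse (mmat_mul_inverse hn hξ))

end Symbol

section Projection

variable {n : ℕ} {ξ : Fin n → ℝ}

lemma projSym_mulVec_self (hn : n ≠ 0) (hM : IsUnit (Mmat n ξ)) (h : Matrix (Fin n) (Fin n) ℝ) :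
    projSym n ξ h *ᵥ ξ = 0 := by
  rw [projSym, sub_mulVec, tf_sprod_mulVec_self hn, mulVec_mulVec,
    mul_nonsing_inv _ ((isUnit_iff_isUnit_det _).1 hM), one_mulVec, sub_self]

@[simp]
lemma trace_projSym (h : Matrix (Fin n) (Fin n) ℝ) : trace (projSym n ξ h) = 0 := by
  simp [projSym, trace_sub]

lemma Matrix.IsSymm.projSym {h : Matrix (Fin n) (Fin n) ℝ} (hh : h.IsSymm) :
    (projSym n ξ h).IsSymm :=
  hh.tf.sub (isSymm_sprod _ _).tf

lemma projSym_eq_self {h : Matrix (Fin n) (Fin n) ℝ} (htr : trace h = 0) (hξ : h *ᵥ ξ = 0) :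
    projSym n ξ h = h := by
  rw [projSym, tf_eq_self htr, hξ, mulVec_zero]
  simp [sprod, tf]

lemma trace_projSym_mul {k : Matrix (Fin n) (Fin n) ℝ} (h : Matrix (Fin n) (Fin n) ℝ)
    (hk : k.IsSymm) (htr : trace k = 0) (hkξ : k *ᵥ ξ = 0) :
    trace (projSym n ξ h * k) = trace (h * k) := by
  rw [projSym, sub_mul, trace_sub, trace_tf_mul _ htr, trace_tf_mul _ htr,
    trace_sprod_mul_eq_zero _ hk hkξ, sub_zero]

end Projection

/-- For `n ≥ 3` and a nonzero `ξ ∈ ℝⁿ`, the matrix `M(ξ)` is invertible and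
`Π(ξ)` is the orthogonal projection of the symmetric matrices `Sym²(ℝⁿ)` (with the Frobenius
inner product `⟨h,k⟩ = trace(h·k)`) onto `K(ξ) = {h : h symmetric, trace(h) = 0, h·ξ = 0}`:
for every symmetric `h`, `Π(ξ)h ∈ K(ξ)`; `Π(ξ)h = h` whenever `h ∈ K(ξ)`; and `h − Π(ξ)h`
is Frobenius-orthogonal to `K(ξ)`. -/
theorem projection_onto_tt_tensors (n : ℕ) (hn : 3 ≤ n) (ξ : Fin n → ℝ) (hξ : ξ ≠ 0) :
    IsUnit (Mmat n ξ)
      ∧ (∀ h : Matrix (Fin n) (Fin n) ℝ, h.IsSymm →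
          (projSym n ξ h).IsSymm ∧ Matrix.trace (projSym n ξ h) = 0
            ∧ (projSym n ξ h).mulVec ξ = 0)
      ∧ (∀ h : Matrix (Fin n) (Fin n) ℝ, h.IsSymm → Matrix.trace h = 0 → h.mulVec ξ = 0 →
          projSym n ξ h = h)
      ∧ (∀ h : Matrix (Fin n) (Fin n) ℝ, h.IsSymm →
          ∀ k : Matrix (Fin n) (Fin n) ℝ, k.IsSymm → Matrix.trace k = 0 → k.mulVec ξ = 0 →
            Matrix.trace ((h - projSym n ξ h) * k) = 0) := by
  have hM : IsUnit (Mmat n ξ) := isUnit_mmat (by omega) hξ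
  refine ⟨hM, fun h hh => ⟨hh.projSym, trace_projSym h, projSym_mulVec_self (by omega) hM h⟩,
    fun h _ htr hhξ => projSym_eq_self htr hhξ, fun h _ k hk htr hkξ => ?_⟩
  rw [sub_mul, trace_sub, trace_projSym_mul h hk htr hkξ, sub_self]
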